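/- The generating function counting total occurrences of labels in the Euclidean tree satisfies Σ_{k≥2} k·A_k(x) = 2x/(1−3x) as formal power series (equivalently, for |x| < 1/3), where A_k(x) = Σ_{1≤i≤k, gcd(i,k)=1} x^{e(k,i)}. -/

import Mathlib

/-!
Every pair `(a, b)` of coprime positive integers is reached from `(1, 1)` by exactly
`eSteps a b` moves `(a, b) ↦ (a + b, b)` or `(a, b) ↦ (a, a + b)`, so the level sets of `eSteps`
are the levels of a binary tree. The two children of `(a, b)` have entry sums adding up to
`3 (a + b)`, hence the entry sums at level `n` total `2 · 3 ^ n`. The pairs `(k, i)` with `i < k`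
at level `n + 1` are exactly the children `(a + b, b)`, so their larger entries also total
`2 · 3 ^ n`, and summing `k x ^ e(k, i)` level by level gives `∑ 2 · 3 ^ n x ^ (n + 1)`,
which converges absolutely for `|x| < 1 / 3`.
-/

def eSteps : ℕ → ℕ → ℕ
  | a, b =>
    if h : 1 ≤ b ∧ b < a then eSteps (a - b) b + 1
    else if h2 : 1 ≤ a ∧ a < b then eSteps a (b - a) + 1
    else 0
termination_by a b => a + b
decreasing_by all_goals omega

noncomputable def Agen (k : ℕ) (x : ℝ) : ℝ :=
  ∑ i ∈ Finset.Icc 1 k, if Nat.gcd i k = 1 then x ^ eSteps k i else 0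

open Finset Function

theorem hasSum_of_hasSum_sum_of_pairwise_disjoint {ι β E : Type*} [NormedAddCommGroup E]
    [CompleteSpace E] {T : ι → Finset β} (hT : Pairwise (Disjoint on T)) {f : β → E}
    (hf : ∀ b, (∀ i, b ∉ T i) → f b = 0) (hnorm : Summable fun i => ∑ b ∈ T i, ‖f b‖) {a : E}
    (ha : HasSum (fun i => ∑ b ∈ T i, f b) a) : HasSum f a := by
  let g : (Σ i, T i) → β := fun s => s.2
  have hg : Injective g := by
    rintro ⟨i, b, hb⟩ ⟨j, c, hc⟩ (rfl : b = c)
    obtain rfl : i = j := by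
      by_contra hij
      exact disjoint_left.1 (hT hij) hb hc
    rfl
  have hrange : ∀ b ∉ Set.range g, f b = 0 := fun b hb =>
    hf b fun i hi => hb ⟨⟨i, b, hi⟩, rfl⟩
  have hfiber (i : ι) : HasSum (fun c : T i => f c) (∑ b ∈ T i, f b) :=
    sum_coe_sort (T i) f ▸ hasSum_fintype _
  have hsummable : Summable (f ∘ g) := by
    refine .of_norm ((summable_sigma_of_nonneg fun _ => norm_nonneg _).2
      ⟨fun _ => .of_finite, ?_⟩)
    simpa only [tsum_fintype, comp_apply, g, sum_coe_sort (T _) fun b => ‖f b‖] using hnorm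
  exact (hg.hasSum_iff hrange).1 (ha.sigma_of_hasSum hfiber hsummable)

theorem eSteps_self (a : ℕ) : eSteps a a = 0 := by
  rw [eSteps]
  simp

theorem eSteps_add_left {a b : ℕ} (ha : 0 < a) (hb : 0 < b) :
    eSteps (a + b) b = eSteps a b + 1 := by
  rw [eSteps, dif_pos ⟨hb, by omega⟩, Nat.add_sub_cancel]

theorem eSteps_add_right {a b : ℕ} (ha : 0 < a) (hb : 0 < b) :
    eSteps a (a + b) = eSteps a b + 1 := by
  rw [eSteps, dif_neg (by omega), dif_pos ⟨ha, by omega⟩, Nat.add_sub_cancel_left]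

theorem eSteps_eq_zero_iff {a b : ℕ} (ha : 0 < a) (hb : 0 < b) : eSteps a b = 0 ↔ a = b := by
  refine ⟨fun h => ?_, fun h => h ▸ eSteps_self a⟩
  rcases lt_trichotomy b a with hlt | rfl | hgt
  · obtain ⟨c, rfl⟩ : ∃ c, a = c + b := ⟨a - b, by omega⟩
    rw [eSteps_add_left (by omega) hb] at h
    omega
  · rfl
  · obtain ⟨c, rfl⟩ : ∃ c, b = a + c := ⟨b - a, by omega⟩
    rw [eSteps_add_right ha (by omega)] at h
    omega

namespace EuclidTree

/-- The tree is modelled on ordered pairs, rooted at `(1, 1)`; the paper's node `{k, i}` with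
`i < k` is the pair `(k, i)`, and the pairs `(i, k)` form the mirror-image half. -/
def children (p : ℕ × ℕ) : Finset (ℕ × ℕ) :=
  {(p.1 + p.2, p.2), (p.1, p.1 + p.2)}

def level : ℕ → Finset (ℕ × ℕ)
  | 0 => {(1, 1)}
  | n + 1 => (level n).biUnion children

theorem mem_level {n : ℕ} {p : ℕ × ℕ} :
    p ∈ level n ↔ 0 < p.1 ∧ 0 < p.2 ∧ p.1.Coprime p.2 ∧ eSteps p.1 p.2 = n := by
  obtain ⟨a, b⟩ := p
  induction n generalizing a b with
  | zero =>
    simp only [level, mem_singleton, Prod.mk.injEq]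
    constructor
    · rintro ⟨rfl, rfl⟩
      exact ⟨one_pos, one_pos, Nat.coprime_one_left 1, eSteps_self 1⟩
    · rintro ⟨ha, hb, hab, he⟩
      obtain rfl := (eSteps_eq_zero_iff ha hb).1 he
      exact ⟨(Nat.coprime_self a).1 hab, (Nat.coprime_self a).1 hab⟩
  | succ n ih =>
    simp only [level, mem_biUnion, children, mem_insert, mem_singleton, Prod.exists, ih,
      Prod.mk.injEq]
    constructor
    · rintro ⟨c, d, ⟨hc, hd, hcd, rfl⟩, ⟨rfl, rfl⟩ | ⟨rfl, rfl⟩⟩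
      · exact ⟨by omega, hd, Nat.coprime_add_self_left.2 hcd, eSteps_add_left hc hd⟩
      · exact ⟨hc, by omega, Nat.coprime_self_add_right.2 hcd, eSteps_add_right hc hd⟩
    · rintro ⟨ha, hb, hab, he⟩
      rcases lt_trichotomy b a with hlt | rfl | hgt
      · obtain ⟨c, rfl⟩ : ∃ c, a = c + b := ⟨a - b, by omega⟩
        rw [eSteps_add_left (by omega) hb] at he
        exact ⟨c, b, ⟨by omega, hb, Nat.coprime_add_self_left.1 hab, by omega⟩, .inl ⟨rfl, rfl⟩⟩
      · rw [eSteps_self] at he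
        omega
      · obtain ⟨c, rfl⟩ : ∃ c, b = a + c := ⟨b - a, by omega⟩
        rw [eSteps_add_right ha (by omega)] at he
        exact ⟨a, c, ⟨ha, by omega, Nat.coprime_self_add_right.1 hab, by omega⟩, .inr ⟨rfl, rfl⟩⟩

theorem level_pairwise_disjoint : Pairwise (Disjoint on level) := fun _ _ hmn =>
  disjoint_left.2 fun _ hm hn => hmn ((mem_level.1 hm).2.2.2.symm.trans (mem_level.1 hn).2.2.2)

theorem children_disjoint {p q : ℕ × ℕ} (hp : 0 < p.1 ∧ 0 < p.2) (hpq : p ≠ q) :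
    Disjoint (children p) (children q) := by
  obtain ⟨a, b⟩ := p
  obtain ⟨c, d⟩ := q
  simp only [children, disjoint_insert_left, disjoint_singleton_left, mem_insert,
    mem_singleton, Prod.mk.injEq, ne_eq] at hp hpq ⊢
  omega

theorem sum_level_succ {M : Type*} [AddCommMonoid M] (g : ℕ × ℕ → M) (n : ℕ) :
    ∑ p ∈ level (n + 1), g p = ∑ p ∈ level n, (g (p.1 + p.2, p.2) + g (p.1, p.1 + p.2)) := by
  rw [level, sum_biUnion fun p hp q _ hpq =>
    children_disjoint ⟨(mem_level.1 hp).1, (mem_level.1 hp).2.1⟩ hpq]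
  refine sum_congr rfl fun p hp => sum_pair ?_
  have := (mem_level.1 hp).1
  simp only [ne_eq, Prod.mk.injEq]
  omega

theorem sum_level_fst_add_snd (n : ℕ) : ∑ p ∈ level n, (p.1 + p.2) = 2 * 3 ^ n := by
  induction n with
  | zero => rfl
  | succ n ih =>
    rw [sum_level_succ, pow_succ, ← mul_assoc, ← ih, sum_mul]
    exact sum_congr rfl fun _ _ => by ring

theorem sum_level_succ_fst_of_snd_lt (n : ℕ) :
    ∑ p ∈ level (n + 1) with p.2 < p.1, p.1 = 2 * 3 ^ n := by
  rw [sum_filter, sum_level_succ, ← sum_level_fst_add_snd n]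
  refine sum_congr rfl fun p hp => ?_
  have := mem_level.1 hp
  rw [if_pos (by omega), if_neg (by omega), add_zero]

noncomputable def labelTerm (x : ℝ) (p : ℕ × ℕ) : ℝ :=
  if 0 < p.2 ∧ p.2 < p.1 ∧ p.1.Coprime p.2 then p.1 * x ^ eSteps p.1 p.2 else 0

theorem norm_labelTerm (x : ℝ) (p : ℕ × ℕ) : ‖labelTerm x p‖ = labelTerm |x| p := by
  unfold labelTerm
  split_ifs <;> simp

theorem labelTerm_eq_zero_of_forall_notMem_level {x : ℝ} {p : ℕ × ℕ}
    (hp : ∀ n, p ∉ level n) : labelTerm x p = 0 :=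
  if_neg fun h => hp _ (mem_level.2 ⟨by omega, h.1, h.2.2, rfl⟩)

theorem sum_level_labelTerm (x : ℝ) (n : ℕ) :
    ∑ p ∈ level n, labelTerm x p = (∑ p ∈ level n with p.2 < p.1, p.1 : ℕ) * x ^ n := by
  rw [sum_filter, Nat.cast_sum, sum_mul]
  refine sum_congr rfl fun p hp => ?_
  obtain ⟨-, h2, hcop, he⟩ := mem_level.1 hp
  by_cases h : p.2 < p.1
  · rw [labelTerm, if_pos ⟨h2, h, hcop⟩, if_pos h, he]
  · rw [labelTerm, if_neg (by tauto), if_neg h, Nat.cast_zero, zero_mul]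

theorem hasSum_sum_level_labelTerm {x : ℝ} (hx : |x| < 1 / 3) :
    HasSum (fun n => ∑ p ∈ level n, labelTerm x p) (2 * x / (1 - 3 * x)) := by
  have h3x : |3 * x| < 1 := by rw [abs_mul, abs_of_pos three_pos]; linarith
  have h0 : ∑ p ∈ level 0, labelTerm x p = 0 := by simp [level, labelTerm]
  refine (hasSum_nat_add_iff' 1).1 ?_
  have hterm : (fun n => ∑ p ∈ level (n + 1), labelTerm x p) = fun n => 2 * x * (3 * x) ^ n := by
    funext n
    rw [sum_level_labelTerm, sum_level_succ_fst_of_snd_lt]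
    push_cast
    ring
  rw [hterm, range_one, sum_singleton, h0, sub_zero, div_eq_mul_inv]
  exact (hasSum_geometric_of_abs_lt_one h3x).mul_left (2 * x)

theorem hasSum_labelTerm {x : ℝ} (hx : |x| < 1 / 3) :
    HasSum (labelTerm x) (2 * x / (1 - 3 * x)) := by
  refine hasSum_of_hasSum_sum_of_pairwise_disjoint level_pairwise_disjoint
    (fun _ => labelTerm_eq_zero_of_forall_notMem_level) ?_ (hasSum_sum_level_labelTerm hx)
  simp only [norm_labelTerm]
  exact (hasSum_sum_level_labelTerm (x := |x|) (by rwa [abs_abs])).summable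

theorem hasSum_labelTerm_fst_eq (x : ℝ) {k : ℕ} (hk : 2 ≤ k) :
    HasSum (fun i => labelTerm x (k, i)) (k * Agen k x) := by
  have hsum : ∑ i ∈ Icc 1 k, labelTerm x (k, i) = k * Agen k x := by
    rw [Agen, mul_sum]
    refine sum_congr rfl fun i hi => ?_
    obtain ⟨hi0, hik⟩ : 0 < i ∧ i ≤ k := mem_Icc.1 hi
    rcases hik.lt_or_eq with hik | rfl
    · simp only [labelTerm, mul_ite, mul_zero, hi0, hik, true_and, Nat.coprime_comm,
        Nat.coprime_iff_gcd_eq_one]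
    · simp only [labelTerm, lt_irrefl, false_and, and_false, if_false, Nat.gcd_self]
      rw [if_neg (by omega), mul_zero]
  rw [← hsum]
  exact hasSum_sum_of_ne_finset_zero fun i hi => if_neg (by rw [mem_Icc] at hi; omega)

theorem hasSum_labelTerm_fst_add_two {x : ℝ} (hx : |x| < 1 / 3) :
    HasSum (fun q : ℕ × ℕ => labelTerm x (q.1 + 2, q.2)) (2 * x / (1 - 3 * x)) := by
  refine (Injective.hasSum_iff (g := fun q : ℕ × ℕ => (q.1 + 2, q.2)) ?_ ?_).2
    (hasSum_labelTerm hx)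
  · rintro ⟨a, b⟩ ⟨c, d⟩ h
    simpa using h
  · rintro ⟨k, i⟩ hk
    refine if_neg fun h => hk ⟨(k - 2, i), ?_⟩
    simp only [Prod.mk.injEq, and_true]
    omega

end EuclidTree

theorem stmt_7 (x : ℝ) (hx : |x| < 1 / 3) :
    ∑' k : ℕ, ((k + 2 : ℕ) : ℝ) * Agen (k + 2) x = 2 * x / (1 - 3 * x) :=
  ((EuclidTree.hasSum_labelTerm_fst_add_two hx).prod_fiberwise fun k =>
    EuclidTree.hasSum_labelTerm_fst_eq x (k := k + 2) (by omega)).tsum_eq
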